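/- Let k, ℓ ≥ 2 be multiplicatively independent integers and let b₁ < b₂ be positive rationals. Then there exist infinitely many pairs (s,t) ∈ ℕ² with b₁ < k^s/ℓ^t < b₂. -/

import Mathlib

/-!
Taking logarithms, with `α = log k` and `β = log ℓ`, the claim is that infinitely many
`s α - t β` (`s, t ∈ ℕ`) lie in the interval `(log b₁, log b₂)`. Multiplicative independence says
`σ α ≠ τ β` for `σ > 0`, so Dirichlet's approximation theorem yields a step `g = σ α - τ β` with
`0 < |g| < log b₂ - log b₁`. A walk that starts below the interval (above it if `g < 0`), with
arbitrarily large `s`, and repeatedly adds `g` cannot jump over the interval, so it lands in it.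
-/

open Real Set

theorem exists_nat_add_mul_mem_Ioo {c d v g : ℝ} (hg : 0 < g) (hgd : g < d - c) (hv : v ≤ c) :
    ∃ m : ℕ, v + m * g ∈ Ioo c d := by
  refine ⟨⌊(c - v) / g⌋₊ + 1, ?_, ?_⟩
  · have := Nat.lt_floor_add_one ((c - v) / g)
    rw [div_lt_iff₀ hg] at this
    push_cast
    linarith
  · have := Nat.floor_le (div_nonneg (sub_nonneg.2 hv) hg.le)
    rw [le_div_iff₀ hg] at this
    push_cast
    linarith

section

variable {α β : ℝ}

theorem exists_nat_abs_mul_sub_mul_lt (hα : 0 ≤ α) (hβ : 0 < β) {δ : ℝ} (hδ : 0 < δ) :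
    ∃ σ τ : ℕ, 0 < σ ∧ |σ * α - τ * β| < δ := by
  obtain ⟨n, hn⟩ := exists_nat_gt (β / δ)
  have hn₀ : 0 < n := by exact_mod_cast (div_pos hβ hδ).trans hn
  obtain ⟨σ, hσ, -, hσξ⟩ := Real.exists_nat_abs_mul_sub_round_le (α / β) hn₀
  set r := round (σ * (α / β)) with hr_def
  have hr : 0 ≤ r := by
    rw [hr_def, round_eq]
    exact Int.floor_nonneg.2 (by positivity)
  have hrcast : ((r.toNat : ℕ) : ℝ) = r := by exact_mod_cast Int.toNat_of_nonneg hr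
  refine ⟨σ, r.toNat, hσ, ?_⟩
  rw [div_lt_iff₀ hδ] at hn
  calc |σ * α - r.toNat * β| = β * |σ * (α / β) - r| := by
        rw [hrcast, ← abs_of_pos hβ, ← abs_mul, abs_of_pos hβ]
        field_simp
    _ ≤ β * (1 / (n + 1)) := by gcongr
    _ < δ := by
        rw [mul_one_div, div_lt_iff₀ (by positivity)]
        linarith

theorem setOf_mul_sub_mul_mem_Ioo_infinite_of_step (hβ : 0 < β) {c d : ℝ} {σ τ : ℕ}
    (hstep : σ * α - τ * β ∈ Ioo 0 (d - c)) :
    {p : ℕ × ℕ | p.1 * α - p.2 * β ∈ Ioo c d}.Infinite := by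
  refine Infinite.of_image Prod.fst (infinite_of_forall_exists_gt fun N ↦ ?_)
  obtain ⟨t₀, ht₀⟩ := exists_nat_ge (((N + 1) * α - c) / β)
  rw [div_le_iff₀ hβ] at ht₀
  obtain ⟨m, hm⟩ := exists_nat_add_mul_mem_Ioo (v := (N + 1) * α - t₀ * β) hstep.1 hstep.2
    (by linarith)
  refine ⟨N + 1 + m * σ, ⟨(N + 1 + m * σ, t₀ + m * τ), ?_, rfl⟩, by omega⟩
  rw [mem_ofPred_eq]
  convert hm using 1
  push_cast
  ring

theorem setOf_mul_sub_mul_mem_Ioo_infinite (hα : 0 < α) (hβ : 0 < β)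
    (hind : ∀ s t : ℕ, (s : ℝ) * α = t * β → s = 0) {c d : ℝ} (hcd : c < d) :
    {p : ℕ × ℕ | p.1 * α - p.2 * β ∈ Ioo c d}.Infinite := by
  obtain ⟨σ, τ, hσ, hstep⟩ := exists_nat_abs_mul_sub_mul_lt hα.le hβ (sub_pos.2 hcd)
  obtain ⟨hstep_gt, hstep_lt⟩ := abs_lt.1 hstep
  have hne : σ * α - τ * β ≠ 0 := fun h ↦ hσ.ne' (hind σ τ (sub_eq_zero.1 h))
  rcases hne.lt_or_gt with hneg | hpos
  · have hswap := setOf_mul_sub_mul_mem_Ioo_infinite_of_step (α := β) (c := -d) (d := -c) (σ := τ)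
      (τ := σ) hα ⟨by linarith, by linarith⟩
    convert hswap.image Prod.swap_injective.injOn using 1
    ext ⟨s, t⟩
    simp only [image_swap_eq_preimage_swap, mem_preimage, Prod.swap_prod_mk, mem_ofPred_eq,
      mem_Ioo]
    constructor <;> rintro ⟨h₁, h₂⟩ <;> constructor <;> linarith
  · exact setOf_mul_sub_mul_mem_Ioo_infinite_of_step hβ ⟨hpos, hstep_lt⟩

end

/-- For multiplicatively independent `k, ℓ ≥ 2` and positive rationals `b₁ < b₂`,
there exist infinitely many pairs `(s,t) ∈ ℕ²` with `b₁ < k^s/ℓ^t < b₂`. -/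
theorem infinitely_many_ratio_in_interval (k l : ℕ) (hk : 2 ≤ k) (hl : 2 ≤ l)
    (hmi : ∀ s t : ℕ, k ^ s = l ^ t → s = 0 ∧ t = 0)
    (b₁ b₂ : ℚ) (hb₁ : 0 < b₁) (hb : b₁ < b₂) :
    {p : ℕ × ℕ | (b₁ : ℝ) < (k : ℝ) ^ p.1 / (l : ℝ) ^ p.2 ∧
      (k : ℝ) ^ p.1 / (l : ℝ) ^ p.2 < (b₂ : ℝ)}.Infinite := by
  have hk₁ : (1 : ℝ) < k := by exact_mod_cast hk
  have hl₁ : (1 : ℝ) < l := by exact_mod_cast hl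
  have hb₁' : (0 : ℝ) < b₁ := by exact_mod_cast hb₁
  have hb' : (b₁ : ℝ) < b₂ := by exact_mod_cast hb
  have hind : ∀ s t : ℕ, (s : ℝ) * log k = t * log l → s = 0 := fun s t h ↦ by
    rw [← log_pow, ← log_pow] at h
    exact (hmi s t (by exact_mod_cast log_injOn_pos (by simp; positivity) (by simp; positivity) h)).1
  convert setOf_mul_sub_mul_mem_Ioo_infinite (log_pos hk₁) (log_pos hl₁) hind
    (log_lt_log hb₁' hb') using 1
  ext ⟨s, t⟩
  have hq : (0 : ℝ) < k ^ s / l ^ t := by positivity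
  simp only [mem_ofPred_eq, mem_Ioo]
  rw [← log_pow, ← log_pow, ← log_div (by positivity) (by positivity),
    log_lt_log_iff hb₁' hq, log_lt_log_iff hq (hb₁'.trans hb')]
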